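/- Suppose ‖∂L_v/∂θ‖ ≤ C_v, ‖∂²L/∂α∂θ‖ ≤ C, the Hessian G* satisfies μI ⪯ G*, κG* ⪯ I with 0 < κμ < 1. Then the difference between the exact implicit hypergradient (using G*⁻¹ = κΣ_{n=0}^∞(I−κG*)ⁿ) and the truncated approximation using only the first N_G+1 terms is bounded in norm by C_v · C · (1/μ)(1 − κμ)^{N_G + 1}. -/

import Mathlib

/-!
With `T = 1 - κ G*`, the operator bounds `μ ≤ G* ≤ 1/κ` give `0 ≤ T ≤ 1 - κ μ`, and since `T` is
self-adjoint its norm is the supremum of its Rayleigh quotient, so `‖T‖ ≤ 1 - κ μ < 1`. The error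
is `κ (∂L_v/∂θ) (∑_{n > N_G} Tⁿ) (∂²L/∂α∂θ)`, and the Neumann tail is bounded by the geometric
tail `(1 - κ μ)^{N_G + 1} / (κ μ)`.
-/

open Finset RCLike

theorem ContinuousLinearMap.norm_le_of_abs_re_inner_le {𝕜 E : Type*} [RCLike 𝕜]
    [NormedAddCommGroup E] [InnerProductSpace 𝕜 E] {T : E →L[𝕜] E}
    (hT : (T : E →ₗ[𝕜] E).IsSymmetric) {r : ℝ} (hr : 0 ≤ r)
    (h : ∀ x, |re (inner 𝕜 (T x) x)| ≤ r * ‖x‖ ^ 2) : ‖T‖ ≤ r := by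
  rw [T.norm_eq_iSup_rayleighQuotient hT]
  refine ciSup_le fun x => ?_
  rcases eq_or_ne x 0 with rfl | hx
  · simpa using hr
  rw [rayleighQuotient, reApplyInnerSelf_apply, abs_div, abs_sq, div_le_iff₀ (by positivity)]
  exact h x

theorem ContinuousLinearMap.norm_one_sub_smul_le {E : Type*} [NormedAddCommGroup E]
    [InnerProductSpace ℝ E] {G : E →L[ℝ] E} (hG : (G : E →ₗ[ℝ] E).IsSymmetric) {μ κ : ℝ}
    (hκ : 0 ≤ κ) (hκμ : κ * μ ≤ 1) (hlow : ∀ x, μ * ‖x‖ ^ 2 ≤ inner ℝ (G x) x)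
    (hupp : ∀ x, inner ℝ ((κ • G) x) x ≤ ‖x‖ ^ 2) :
    ‖1 - κ • G‖ ≤ 1 - κ * μ := by
  refine norm_le_of_abs_re_inner_le (LinearMap.IsSymmetric.id.sub (hG.smul (conj_trivial κ)))
    (by linarith) fun x => ?_
  have hinner : inner ℝ ((1 - κ • G) x) x = ‖x‖ ^ 2 - κ * inner ℝ (G x) x := by
    simp [inner_sub_left, real_inner_smul_left]
  have hG_upper := hupp x
  have hG_lower := mul_le_mul_of_nonneg_left (hlow x) hκ
  rw [smul_apply, real_inner_smul_left] at hG_upper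
  rw [re_to_real, hinner, abs_le]
  constructor <;> nlinarith

theorem norm_tsum_geometric_sub_sum_range_le {R : Type*} [NormedRing R] [HasSummableGeomSeries R]
    {x : R} {r : ℝ} (hx : ‖x‖ ≤ r) (hr : r < 1) {N : ℕ} (hN : 0 < N) :
    ‖∑' n, x ^ n - ∑ n ∈ range N, x ^ n‖ ≤ r ^ N / (1 - r) := by
  have hr0 : 0 ≤ r := (norm_nonneg x).trans hx
  have htail : ∑' n, x ^ n - ∑ n ∈ range N, x ^ n = ∑' n, x ^ (n + N) := by
    rw [sub_eq_iff_eq_add', (summable_geometric_of_norm_lt_one (hx.trans_lt hr)).sum_add_tsum_nat_add]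
  have hterm n : ‖x ^ (n + N)‖ ≤ r ^ N * r ^ n :=
    calc ‖x ^ (n + N)‖ ≤ ‖x‖ ^ (n + N) := norm_pow_le' x (by omega)
      _ ≤ r ^ (n + N) := by gcongr
      _ = r ^ N * r ^ n := by ring
  rw [htail, div_eq_mul_inv]
  exact tsum_of_norm_bounded ((hasSum_geometric_of_lt_one hr0 hr).mul_left _) hterm

/-- Truncation error of the Neumann-series hypergradient: with `‖∂L_v/∂θ‖ ≤ C_v`,
`‖∂²L/∂α∂θ‖ ≤ C`, `μ I ⪯ G*`, `κ G* ⪯ I`, `0 < κ μ < 1`, the difference between the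
exact implicit hypergradient (full Neumann series) and the approximation keeping only
the first `N_G + 1` terms is bounded in norm by `C_v C (1/μ) (1 - κ μ)^{N_G + 1}`. -/
theorem stmt_7 (m p : ℕ) (Cv C μ κ : ℝ) (NG : ℕ)
    (A : EuclideanSpace ℝ (Fin m) →L[ℝ] ℝ)
    (B : EuclideanSpace ℝ (Fin p) →L[ℝ] EuclideanSpace ℝ (Fin m))
    (G : EuclideanSpace ℝ (Fin m) →L[ℝ] EuclideanSpace ℝ (Fin m))
    (Da : EuclideanSpace ℝ (Fin p) →L[ℝ] ℝ)
    (hA : ‖A‖ ≤ Cv) (hB : ‖B‖ ≤ C)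
    (hG : IsSelfAdjoint G)
    (hμ : 0 < μ) (hκ : 0 < κ) (hκμ : κ * μ < 1)
    (hlow : ∀ x : EuclideanSpace ℝ (Fin m), μ * ‖x‖ ^ 2 ≤ (inner ℝ (G x) x : ℝ))
    (hupp : ∀ x : EuclideanSpace ℝ (Fin m), (inner ℝ ((κ • G) x) x : ℝ) ≤ ‖x‖ ^ 2) :
    ‖(Da - κ • (A.comp ((∑' n : ℕ, (1 - κ • G) ^ n).comp B))) -
        (Da - κ • (A.comp ((∑ n ∈ Finset.range (NG + 1), (1 - κ • G) ^ n).comp B)))‖ ≤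
      Cv * C * (1 / μ) * (1 - κ * μ) ^ (NG + 1) := by
  set T := 1 - κ • G
  set D := ∑' n : ℕ, T ^ n - ∑ n ∈ Finset.range (NG + 1), T ^ n
  have hT : ‖T‖ ≤ 1 - κ * μ :=
    ContinuousLinearMap.norm_one_sub_smul_le hG.isSymmetric hκ.le hκμ.le hlow hupp
  have hD : ‖D‖ ≤ (1 - κ * μ) ^ (NG + 1) / (κ * μ) := by
    simpa using norm_tsum_geometric_sub_sum_range_le hT (by nlinarith) NG.succ_pos
  have herror : (Da - κ • (A.comp ((∑' n : ℕ, T ^ n).comp B))) -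
      (Da - κ • (A.comp ((∑ n ∈ Finset.range (NG + 1), T ^ n).comp B))) =
      -(κ • A.comp (D.comp B)) := by
    simp only [D, ContinuousLinearMap.sub_comp, ContinuousLinearMap.comp_sub, smul_sub]
    abel
  rw [herror, norm_neg]
  calc ‖κ • A.comp (D.comp B)‖ ≤ κ * (‖A‖ * (‖D‖ * ‖B‖)) := by
        grw [norm_smul, Real.norm_of_nonneg hκ.le, ContinuousLinearMap.opNorm_comp_le,
          ContinuousLinearMap.opNorm_comp_le]
    _ ≤ κ * (Cv * ((1 - κ * μ) ^ (NG + 1) / (κ * μ) * C)) := by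
        have hCv : 0 ≤ Cv := (norm_nonneg A).trans hA
        gcongr
    _ = Cv * C * (1 / μ) * (1 - κ * μ) ^ (NG + 1) := by
        field_simp
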